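/- arXiv:2111.07196 — 2 statements merged into one kernel-verified Lean document; each statement's English description precedes it below -/
import Mathlib

section
/- For all φ ∈ (0, π), B_c(φ)·cos(ψ_c(φ)) − B_s(φ)·sin(ψ_s(φ)) > 0, i.e. the real part of α₂(φ) exceeds the imaginary part of (1−α₂(φ)²)^{1/2}; equivalently B_c(φ) > B_s(φ) and cos(ψ_c(φ)) > sin(ψ_s(φ)). -/
open Real Set

noncomputable def α₂ (φ : ℝ) : ℂ :=
  1 + ((Real.cos φ : ℂ) - 1) * Complex.exp (2 * Real.pi * Complex.I / 3)

noncomputable def Bc (φ : ℝ) : ℝ := ‖α₂ φ‖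

noncomputable def ψc (φ : ℝ) : ℝ := (α₂ φ).arg

noncomputable def Bs (φ : ℝ) : ℝ :=
  ((1 - Real.cos φ) ^ 2 * (7 - 4 * Real.cos φ + Real.cos φ ^ 2)) ^ ((1 : ℝ) / 4)

noncomputable def ψs (φ : ℝ) : ℝ :=
  π / 2 + Real.arctan (Real.sqrt 3 * (3 - Real.cos φ) / (-1 - Real.cos φ)) / 2

/-!
Write `c = cos φ`. Then `α₂ = ((3 - c) + i √3 (c - 1)) / 2`, so `Bc cos ψc = Re α₂ = (3 - c) / 2`,
`Bc² = 3 - 3c + c²` and `cos² ψc = 1/2 + (3 - c²) / (4 Bc²)`, while the half-angle formula gives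
`sin² ψs = 1/2 + (1 + c) / (4 √(7 - 4c + c²))`. Both comparisons reduce to polynomial identities:
`Bc⁴ - Bs⁴ = 2 - c²`, and
`(7 - 4c + c²)(3 - c²)² - (1 + c)²(3 - 3c + c²)² = 3 (3 - c)² (2 - c²)`.
-/

lemma cexp_two_pi_mul_I_div_three :
    Complex.exp (2 * π * Complex.I / 3) = ⟨-(1 / 2), √3 / 2⟩ := by
  have hcos : cos (2 * π / 3) = -(1 / 2) := by
    rw [show 2 * π / 3 = π - π / 3 by ring, cos_pi_sub, cos_pi_div_three]
  have hsin : sin (2 * π / 3) = √3 / 2 := by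
    rw [show 2 * π / 3 = π - π / 3 by ring, sin_pi_sub, sin_pi_div_three]
  rw [show 2 * (π : ℂ) * Complex.I / 3 = ((2 * π / 3 : ℝ) : ℂ) * Complex.I by push_cast; ring,
    Complex.exp_mul_I, ← Complex.ofReal_cos, ← Complex.ofReal_sin, hcos, hsin]
  apply Complex.ext <;> simp

lemma cos_half_arctan_sq (x : ℝ) : cos (arctan x / 2) ^ 2 = 1 / 2 + 1 / (2 * √(1 + x ^ 2)) := by
  rw [cos_sq, show 2 * (arctan x / 2) = arctan x by ring, cos_arctan]
  ring

lemma mul_lt_sqrt_mul_of_sq_lt_two {c : ℝ} (hc : c ^ 2 < 2) :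
    (1 + c) * (3 - 3 * c + c ^ 2) < √(7 - 4 * c + c ^ 2) * (3 - c ^ 2) := by
  have h3 : 0 < 3 - c ^ 2 := by linarith
  rw [← div_lt_iff₀ h3]
  apply lt_sqrt_of_sq_lt
  rw [div_pow, div_lt_iff₀ (by positivity)]
  have : 0 < (3 - c) ^ 2 * (2 - c ^ 2) := mul_pos (pow_pos (by nlinarith) 2) (by linarith)
  linarith

lemma seven_sub_four_mul_add_sq_pos (c : ℝ) : 0 < 7 - 4 * c + c ^ 2 := by
  nlinarith [sq_nonneg (c - 2)]

section

variable (φ : ℝ)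

lemma α₂_re : (α₂ φ).re = (3 - cos φ) / 2 := by
  simp only [α₂, cexp_two_pi_mul_I_div_three, Complex.add_re, Complex.mul_re,
    Complex.sub_re, Complex.sub_im, Complex.ofReal_re, Complex.ofReal_im, Complex.one_re,
    Complex.one_im]
  ring

lemma α₂_im : (α₂ φ).im = √3 * (cos φ - 1) / 2 := by
  simp only [α₂, cexp_two_pi_mul_I_div_three, Complex.add_im, Complex.mul_im,
    Complex.sub_re, Complex.sub_im, Complex.ofReal_re, Complex.ofReal_im, Complex.one_re,
    Complex.one_im]
  ring

lemma Bc_mul_cos_ψc : Bc φ * cos (ψc φ) = (3 - cos φ) / 2 :=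
  (Complex.norm_mul_cos_arg _).trans (α₂_re φ)

lemma Bc_sq : Bc φ ^ 2 = 3 - 3 * cos φ + cos φ ^ 2 := by
  rw [Bc, Complex.sq_norm, Complex.normSq_apply, α₂_re, α₂_im]
  linear_combination ((cos φ - 1) ^ 2 / 4) * Real.mul_self_sqrt (show (0 : ℝ) ≤ 3 by norm_num)

lemma Bc_pos : 0 < Bc φ :=
  (α₂_re φ ▸ by linarith [cos_le_one φ] : 0 < (α₂ φ).re).trans_le (Complex.re_le_norm _)

lemma cos_ψc_pos : 0 < cos (ψc φ) := by
  have h : 0 < Bc φ * cos (ψc φ) := by rw [Bc_mul_cos_ψc]; linarith [cos_le_one φ]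
  exact pos_of_mul_pos_right h (Bc_pos φ).le

lemma cos_ψc_sq : cos (ψc φ) ^ 2 = 1 / 2 + (3 - cos φ ^ 2) / (4 * (3 - 3 * cos φ + cos φ ^ 2)) := by
  have hBc := (Bc_pos φ).ne'
  have hcos : cos (ψc φ) = (3 - cos φ) / (2 * Bc φ) := by
    rw [eq_div_iff (by positivity)]
    linear_combination 2 * Bc_mul_cos_ψc φ
  have hS : 3 - 3 * cos φ + cos φ ^ 2 ≠ 0 := Bc_sq φ ▸ pow_ne_zero 2 hBc
  rw [hcos, div_pow, mul_pow, Bc_sq, div_add_div _ _ two_ne_zero (mul_ne_zero four_ne_zero hS),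
    div_eq_div_iff (by simpa using hS) (by simpa using hS)]
  ring

lemma Bs_nonneg : 0 ≤ Bs φ :=
  rpow_nonneg (mul_nonneg (sq_nonneg _) (seven_sub_four_mul_add_sq_pos _).le) _

lemma Bs_pow_four : Bs φ ^ 4 = (1 - cos φ) ^ 2 * (7 - 4 * cos φ + cos φ ^ 2) := by
  have h : 0 ≤ (1 - cos φ) ^ 2 * (7 - 4 * cos φ + cos φ ^ 2) :=
    mul_nonneg (sq_nonneg _) (seven_sub_four_mul_add_sq_pos _).le
  rw [Bs, ← rpow_natCast, ← rpow_mul h]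
  norm_num

lemma Bs_lt_Bc : Bs φ < Bc φ := by
  apply lt_of_pow_lt_pow_left₀ 4 (Bc_pos φ).le
  rw [Bs_pow_four, show Bc φ ^ 4 = (Bc φ ^ 2) ^ 2 by ring, Bc_sq]
  nlinarith [cos_sq_le_one φ]

lemma sin_ψs : sin (ψs φ) = cos (arctan (√3 * (3 - cos φ) / (-1 - cos φ)) / 2) := by
  rw [ψs, sin_add]
  simp

lemma sin_ψs_pos : 0 < sin (ψs φ) := by
  rw [sin_ψs]
  apply cos_pos_of_mem_Ioo
  constructor <;> linarith [neg_pi_div_two_lt_arctan (√3 * (3 - cos φ) / (-1 - cos φ)),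
    arctan_lt_pi_div_two (√3 * (3 - cos φ) / (-1 - cos φ)), pi_pos]

variable {φ}

lemma sin_ψs_sq (hc : -1 < cos φ) :
    sin (ψs φ) ^ 2 = 1 / 2 + (1 + cos φ) / (4 * √(7 - 4 * cos φ + cos φ ^ 2)) := by
  have h1c : 0 < 1 + cos φ := by linarith
  have hne : -1 - cos φ ≠ 0 := by linarith
  have hQ := sqrt_pos.mpr (seven_sub_four_mul_add_sq_pos (cos φ))
  have hsqrt : √(1 + (√3 * (3 - cos φ) / (-1 - cos φ)) ^ 2)
      = 2 * √(7 - 4 * cos φ + cos φ ^ 2) / (1 + cos φ) := by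
    rw [sqrt_eq_iff_mul_self_eq_of_pos (by positivity), div_pow, mul_pow,
      sq_sqrt (by norm_num : (0 : ℝ) ≤ 3)]
    field_simp
    rw [sq_sqrt (seven_sub_four_mul_add_sq_pos _).le]
    ring
  rw [sin_ψs, cos_half_arctan_sq, hsqrt]
  field_simp
  ring

lemma sin_ψs_lt_cos_ψc (hc : -1 < cos φ) : sin (ψs φ) < cos (ψc φ) := by
  apply lt_of_pow_lt_pow_left₀ 2 (cos_ψc_pos φ).le
  have hQ := sqrt_pos.mpr (seven_sub_four_mul_add_sq_pos (cos φ))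
  have hS : 0 < 3 - 3 * cos φ + cos φ ^ 2 := Bc_sq φ ▸ pow_pos (Bc_pos φ) 2
  rw [sin_ψs_sq hc, cos_ψc_sq, add_lt_add_iff_left, div_lt_div_iff₀ (by positivity) (by positivity)]
  linarith [mul_lt_sqrt_mul_of_sq_lt_two (by linarith [cos_sq_le_one φ] : cos φ ^ 2 < 2)]

end

theorem Bc_cos_sub_Bs_sin_pos :
    ∀ φ ∈ Ioo (0 : ℝ) π,
      0 < Bc φ * Real.cos (ψc φ) - Bs φ * Real.sin (ψs φ) ∧
        Bs φ < Bc φ ∧ Real.sin (ψs φ) < Real.cos (ψc φ) := by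
  rintro φ ⟨hφ0, hφπ⟩
  have hc : -1 < cos φ := by simpa using cos_lt_cos_of_nonneg_of_le_pi hφ0.le le_rfl hφπ
  have hBs := Bs_lt_Bc φ
  have hsin := sin_ψs_lt_cos_ψc hc
  refine ⟨sub_pos.mpr ?_, hBs, hsin⟩
  exact mul_lt_mul'' hBs hsin (Bs_nonneg φ) (sin_ψs_pos φ).le
end

section
/- With c = Re β and b = Im β as above, c′ and b′ are strictly decreasing on (0,π), with boundary values c′(0⁺)=1/2, c′(π⁻)=0, b′(0⁺)=√3/2, b′(π⁻)=0. -/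
/-!
Put `t = 1 - cos φ ∈ (0, 2)` and `ω = e^{2πi/3}`, so that `cos β = 1 - tω`. Differentiating gives
`sin β · β' = sin φ · ω`; squaring, with `sin² β = tω(2 - tω)` and `sin² φ = t(2 - t)`, eliminates
the branch: `β'² = w(t) := (2 - t)ω / (2 - tω)`. The condition `Im β > 0` puts `sin β`, and with it
`β'`, in the open first quadrant, so `c' = √((|w| + Re w) / 2)` and `b' = √((|w| - Re w) / 2)`.
With `D = t² + 2t + 4 = |2 - tω|²` one has `|w| = (2 - t) / √D` and `Re w = -(2 - t)(1 + t) / D`,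
and both `|w| ± Re w` are strictly decreasing on `[0, 2]`. As `t` increases with `φ`, and
`w(0) = ω`, `w(2) = 0`, this gives the monotonicity and the boundary values.
-/

open Real Set Filter Topology

theorem StrictAntiOn.div_of_monotoneOn {α 𝕜 : Type*} [Preorder α] [Field 𝕜] [LinearOrder 𝕜]
    [IsStrictOrderedRing 𝕜] {f g : α → 𝕜} {s : Set α} (hf : StrictAntiOn f s)
    (hf0 : ∀ x ∈ s, 0 ≤ f x) (hg : MonotoneOn g s) (hg0 : ∀ x ∈ s, 0 < g x) :
    StrictAntiOn (fun x => f x / g x) s := fun x hx y hy hxy =>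
  calc f y / g y ≤ f y / g x := div_le_div_of_nonneg_left (hf0 y hy) (hg0 x hx) (hg hx hy hxy.le)
    _ < f x / g x := div_lt_div_of_pos_right (hf hx hy hxy) (hg0 x hx)

theorem HasDerivAt.re {f : ℝ → ℂ} {f' : ℂ} {x : ℝ} (h : HasDerivAt f f' x) :
    HasDerivAt (fun x => (f x).re) f'.re x := by
  simpa [Function.comp_def] using Complex.reCLM.hasFDerivAt.comp_hasDerivAt x h

theorem HasDerivAt.im {f : ℝ → ℂ} {f' : ℂ} {x : ℝ} (h : HasDerivAt f f' x) :
    HasDerivAt (fun x => (f x).im) f'.im x := by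
  simpa [Function.comp_def] using Complex.imCLM.hasFDerivAt.comp_hasDerivAt x h

namespace Complex

theorem re_eq_sqrt_of_nonneg {z : ℂ} (h : 0 ≤ z.re) : z.re = √((‖z ^ 2‖ + (z ^ 2).re) / 2) := by
  rw [norm_pow, Complex.sq_norm, normSq_apply, pow_two z, mul_re,
    show (z.re * z.re + z.im * z.im + (z.re * z.re - z.im * z.im)) / 2 = z.re ^ 2 by ring,
    Real.sqrt_sq h]

theorem im_eq_sqrt_of_nonneg {z : ℂ} (h : 0 ≤ z.im) : z.im = √((‖z ^ 2‖ - (z ^ 2).re) / 2) := by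
  rw [norm_pow, Complex.sq_norm, normSq_apply, pow_two z, mul_re,
    show (z.re * z.re + z.im * z.im - (z.re * z.re - z.im * z.im)) / 2 = z.im ^ 2 by ring,
    Real.sqrt_sq h]

theorem cos_im (z : ℂ) : (cos z).im = -(Real.sin z.re * Real.sinh z.im) := by
  rw [cos_eq]
  simp [cos_ofReal_im, sin_ofReal_re, sinh_ofReal_re]

theorem sin_re (z : ℂ) : (sin z).re = Real.sin z.re * Real.cosh z.im := by
  rw [sin_eq]
  simp [cos_ofReal_im, sin_ofReal_re, cosh_ofReal_re]

end Complex

namespace ArccosBranch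

open Complex (I normSq)

noncomputable def ω : ℂ := Complex.exp (2 * π * I / 3)

lemma ω_eq : ω = ⟨-1 / 2, √3 / 2⟩ := by
  have h : 2 * π / 3 = π - π / 3 := by ring
  rw [ω, show 2 * (π : ℂ) * I / 3 = ((2 * π / 3 : ℝ) : ℂ) * I by push_cast; ring,
    Complex.exp_mul_I, ← Complex.ofReal_cos, ← Complex.ofReal_sin, h, cos_pi_sub, sin_pi_sub,
    cos_pi_div_three, sin_pi_div_three]
  apply Complex.ext <;> norm_num

lemma ω_re : ω.re = -1 / 2 := by rw [ω_eq]

lemma ω_im : ω.im = √3 / 2 := by rw [ω_eq]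

lemma norm_ω : ‖ω‖ = 1 := by
  rw [ω, show 2 * (π : ℂ) * I / 3 = ((2 * π / 3 : ℝ) : ℂ) * I by push_cast; ring,
    Complex.norm_exp_ofReal_mul_I]

lemma sqrt_three_sq : √3 ^ 2 = 3 := Real.sq_sqrt (by norm_num)

lemma sq_add_two_mul_add_four_pos (t : ℝ) : 0 < t ^ 2 + 2 * t + 4 := by
  nlinarith [sq_nonneg (t + 1)]

lemma monotoneOn_sq_add_two_mul_add_four : MonotoneOn (fun t : ℝ => t ^ 2 + 2 * t + 4) (Ici 0) :=
  fun s hs t _ hst => by nlinarith [mem_Ici.1 hs]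

lemma monotoneOn_sqrt_sq_add_two_mul_add_four :
    MonotoneOn (fun t : ℝ => √(t ^ 2 + 2 * t + 4)) (Ici 0) :=
  fun _ hs _ ht hst => Real.sqrt_le_sqrt (monotoneOn_sq_add_two_mul_add_four hs ht hst)

lemma normSq_two_sub_mul_ω (t : ℝ) : normSq (2 - t * ω) = t ^ 2 + 2 * t + 4 := by
  rw [Complex.normSq_apply]
  simp only [Complex.sub_re, Complex.sub_im, Complex.mul_re, Complex.mul_im, Complex.ofReal_re,
    Complex.ofReal_im, ω_re, ω_im]
  norm_num
  linear_combination (t ^ 2 / 4) * sqrt_three_sq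

lemma norm_two_sub_mul_ω (t : ℝ) : ‖(2 : ℂ) - t * ω‖ = √(t ^ 2 + 2 * t + 4) := by
  rw [Complex.norm_def, normSq_two_sub_mul_ω]

lemma two_sub_mul_ω_ne_zero (t : ℝ) : (2 : ℂ) - t * ω ≠ 0 := by
  rw [← Complex.normSq_pos, normSq_two_sub_mul_ω]
  exact sq_add_two_mul_add_four_pos t

noncomputable def derivSq (t : ℝ) : ℂ := (2 - t) * ω / (2 - t * ω)

lemma norm_derivSq {t : ℝ} (ht : t ≤ 2) : ‖derivSq t‖ = (2 - t) / √(t ^ 2 + 2 * t + 4) := by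
  rw [derivSq, norm_div, norm_mul, norm_ω, norm_two_sub_mul_ω,
    show (2 : ℂ) - t = ((2 - t : ℝ) : ℂ) by push_cast; ring, Complex.norm_real,
    Real.norm_of_nonneg (by linarith), mul_one]

lemma re_derivSq (t : ℝ) : (derivSq t).re = (t - 2) * (t + 1) / (t ^ 2 + 2 * t + 4) := by
  rw [derivSq, Complex.div_re, normSq_two_sub_mul_ω]
  simp only [Complex.sub_re, Complex.sub_im, Complex.mul_re, Complex.mul_im, Complex.ofReal_re,
    Complex.ofReal_im, Complex.re_ofNat, Complex.im_ofNat, ω_re, ω_im]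
  rw [← add_div]
  congr 1
  linear_combination (-(t * (2 - t) / 4)) * sqrt_three_sq

lemma im_derivSq (t : ℝ) : (derivSq t).im = √3 * (2 - t) / (t ^ 2 + 2 * t + 4) := by
  rw [derivSq, Complex.div_im, normSq_two_sub_mul_ω]
  simp only [Complex.sub_re, Complex.sub_im, Complex.mul_re, Complex.mul_im, Complex.ofReal_re,
    Complex.ofReal_im, Complex.re_ofNat, Complex.im_ofNat, ω_re, ω_im]
  rw [← sub_div]
  congr 1
  ring

lemma continuous_derivSq : Continuous derivSq :=
  Continuous.div (by fun_prop) (by fun_prop) two_sub_mul_ω_ne_zero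

lemma derivSq_zero : derivSq 0 = ω := by simp [derivSq]

lemma derivSq_two : derivSq 2 = 0 := by simp [derivSq]

/-- The form in which the numerator decreases and the denominator increases on `[0, 2]`. -/
lemma norm_add_re_derivSq {t : ℝ} (h0 : 0 ≤ t) (h2 : t ≤ 2) :
    ‖derivSq t‖ + (derivSq t).re =
      3 * (2 - t) / ((t ^ 2 + 2 * t + 4) * (√(t ^ 2 + 2 * t + 4) + 1 + t)) := by
  have hD := sq_add_two_mul_add_four_pos t
  have hS : √(t ^ 2 + 2 * t + 4) ^ 2 = t ^ 2 + 2 * t + 4 := Real.sq_sqrt hD.le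
  have hS0 : 0 < √(t ^ 2 + 2 * t + 4) := Real.sqrt_pos.2 hD
  rw [norm_derivSq h2, re_derivSq, div_add_div _ _ hS0.ne' hD.ne',
    div_eq_div_iff (by positivity) (by positivity)]
  linear_combination -((2 - t) * (t + 1) * (t ^ 2 + 2 * t + 4)) * hS

lemma strictAntiOn_norm_add_re_derivSq :
    StrictAntiOn (fun t => ‖derivSq t‖ + (derivSq t).re) (Icc 0 2) := by
  have hmono : MonotoneOn (fun t : ℝ => (t ^ 2 + 2 * t + 4) * (√(t ^ 2 + 2 * t + 4) + 1 + t))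
      (Icc 0 2) := fun s hs t ht hst =>
    mul_le_mul (monotoneOn_sq_add_two_mul_add_four hs.1 ht.1 hst)
      (by linarith [monotoneOn_sqrt_sq_add_two_mul_add_four hs.1 ht.1 hst])
      (by linarith [hs.1, Real.sqrt_nonneg (s ^ 2 + 2 * s + 4)])
      (sq_add_two_mul_add_four_pos t).le
  refine (StrictAntiOn.div_of_monotoneOn (f := fun t => 3 * (2 - t)) ?_ ?_ hmono ?_).congr ?_
  · exact fun s _ t _ hst => by linarith
  · exact fun t ht => by linarith [ht.2]
  · exact fun t ht => mul_pos (sq_add_two_mul_add_four_pos t)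
      (by linarith [ht.1, Real.sqrt_nonneg (t ^ 2 + 2 * t + 4)])
  · exact fun t ht => (norm_add_re_derivSq ht.1 ht.2).symm

lemma strictAntiOn_neg_re_derivSq : StrictAntiOn (fun t => -(derivSq t).re) (Icc 0 2) := by
  intro s hs t ht hst
  simp only [re_derivSq, ← neg_div, neg_mul_eq_neg_mul, neg_sub]
  rw [div_lt_div_iff₀ (sq_add_two_mul_add_four_pos t) (sq_add_two_mul_add_four_pos s)]
  nlinarith [mul_pos (sub_pos.2 hst) (show 0 < 2 * t + 2 * s + s * t by nlinarith [hs.1])]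

lemma strictAntiOn_norm_sub_re_derivSq :
    StrictAntiOn (fun t => ‖derivSq t‖ - (derivSq t).re) (Icc 0 2) := by
  have hnorm : StrictAntiOn (fun t => ‖derivSq t‖) (Icc 0 2) := by
    refine (StrictAntiOn.div_of_monotoneOn (f := fun t => 2 - t) ?_ ?_
      (monotoneOn_sqrt_sq_add_two_mul_add_four.mono Icc_subset_Ici_self) ?_).congr ?_
    · exact fun s _ t _ hst => by linarith
    · exact fun t ht => by linarith [ht.2]
    · exact fun t _ => Real.sqrt_pos.2 (sq_add_two_mul_add_four_pos t)
    · exact fun t ht => (norm_derivSq ht.2).symm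
  exact fun s hs t ht hst => by
    simpa only [sub_eq_add_neg] using
      add_lt_add (hnorm hs ht hst) (strictAntiOn_neg_re_derivSq hs ht hst)

noncomputable def reDeriv (t : ℝ) : ℝ := √((‖derivSq t‖ + (derivSq t).re) / 2)

noncomputable def imDeriv (t : ℝ) : ℝ := √((‖derivSq t‖ - (derivSq t).re) / 2)

lemma strictAntiOn_reDeriv : StrictAntiOn reDeriv (Icc 0 2) := fun _ _ t _ hst =>
  Real.sqrt_lt_sqrt (by linarith [neg_abs_le (derivSq t).re, Complex.abs_re_le_norm (derivSq t)])
    (by linarith [strictAntiOn_norm_add_re_derivSq ‹_› ‹_› hst])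

lemma strictAntiOn_imDeriv : StrictAntiOn imDeriv (Icc 0 2) := fun _ _ t _ hst =>
  Real.sqrt_lt_sqrt (by linarith [Complex.re_le_norm (derivSq t)])
    (by linarith [strictAntiOn_norm_sub_re_derivSq ‹_› ‹_› hst])

lemma continuous_reDeriv : Continuous reDeriv :=
  ((continuous_derivSq.norm.add (Complex.continuous_re.comp continuous_derivSq)).div_const 2).sqrt

lemma continuous_imDeriv : Continuous imDeriv :=
  ((continuous_derivSq.norm.sub (Complex.continuous_re.comp continuous_derivSq)).div_const 2).sqrt

lemma reDeriv_zero : reDeriv 0 = 1 / 2 := by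
  rw [reDeriv, derivSq_zero, norm_ω, ω_re, show (1 + -1 / 2) / 2 = (1 / 2 : ℝ) ^ 2 by norm_num,
    Real.sqrt_sq (by norm_num)]

lemma imDeriv_zero : imDeriv 0 = √3 / 2 := by
  rw [imDeriv, derivSq_zero, norm_ω, ω_re, show (1 - -1 / 2) / 2 = (√3 / 2) ^ 2 by
    rw [div_pow, sqrt_three_sq]; norm_num, Real.sqrt_sq (by positivity)]

lemma reDeriv_two : reDeriv 2 = 0 := by simp [reDeriv, derivSq_two]

lemma imDeriv_two : imDeriv 2 = 0 := by simp [imDeriv, derivSq_two]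

lemma sin_mul_deriv_eq {β : ℝ → ℂ} {φ : ℝ} (hβ : DifferentiableAt ℝ β φ)
    (hcos : ∀ᶠ x in 𝓝 φ, Complex.cos (β x) = 1 + (Real.cos x - 1) * ω) :
    Complex.sin (β φ) * deriv β φ = Real.sin φ * ω := by
  have hlhs : HasDerivAt (fun x => Complex.cos (β x)) (-Complex.sin (β φ) * deriv β φ) φ := by
    simpa [Function.comp_def, mul_comm] using
      (Complex.hasDerivAt_cos (β φ)).complexToReal_fderiv.comp_hasDerivAt φ hβ.hasDerivAt
  have hrhs : HasDerivAt (fun x : ℝ => 1 + (Real.cos x - 1) * ω) (-Real.sin φ * ω) φ := by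
    simpa using (((Real.hasDerivAt_cos φ).ofReal_comp.sub_const 1).mul_const ω).const_add 1
  linear_combination -(hlhs.unique (hrhs.congr_of_eventuallyEq hcos))

lemma sq_eq_derivSq {z d : ℂ} {t u : ℝ} (ht : t ≠ 0) (hu : u ^ 2 = t * (2 - t))
    (hz : Complex.cos z = 1 - t * ω) (hd : Complex.sin z * d = u * ω) :
    d ^ 2 = derivSq t := by
  have hsin_sq : Complex.sin z ^ 2 = t * ω * (2 - t * ω) := by
    linear_combination Complex.sin_sq_add_cos_sq z - (Complex.cos z + 1 - t * ω) * hz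
  have hu' : (u : ℂ) ^ 2 = t * (2 - t) := by exact_mod_cast hu
  have hcancel : (t * ω) * ((2 - t * ω) * d ^ 2) = (t * ω) * ((2 - t) * ω) := by
    linear_combination (Complex.sin z * d + u * ω) * hd - d ^ 2 * hsin_sq + ω ^ 2 * hu'
  have htω : (t : ℂ) * ω ≠ 0 := mul_ne_zero (Complex.ofReal_ne_zero.2 ht) (by simp [ω])
  rw [derivSq, eq_div_iff (two_sub_mul_ω_ne_zero t), mul_comm]
  exact mul_left_cancel₀ htω hcancel

lemma sin_re_pos_and_im_pos {z : ℂ} {t : ℝ} (ht : 0 < t) (hz : Complex.cos z = 1 - t * ω)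
    (him : 0 < z.im) : 0 < (Complex.sin z).re ∧ 0 < (Complex.sin z).im := by
  have hcos_im : Real.sin z.re * Real.sinh z.im = √3 / 2 * t := by
    have := congrArg Complex.im hz
    simp only [Complex.cos_im, Complex.sub_im, Complex.one_im, Complex.mul_im, Complex.ofReal_re,
      Complex.ofReal_im, ω_re, ω_im] at this
    linarith
  have hsin : 0 < Real.sin z.re :=
    pos_of_mul_pos_left (hcos_im ▸ by positivity) (Real.sinh_pos_iff.2 him).le
  have hre : 0 < (Complex.sin z).re := by
    rw [Complex.sin_re]
    exact mul_pos hsin (Real.cosh_pos _)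
  have hsq_im : (Complex.sin z ^ 2).im = √3 * t + √3 / 2 * t ^ 2 := by
    rw [show Complex.sin z ^ 2 = 1 - Complex.cos z ^ 2 by
      linear_combination Complex.sin_sq_add_cos_sq z, hz]
    simp only [pow_two, Complex.sub_im, Complex.one_im, Complex.mul_im, Complex.mul_re,
      Complex.sub_re, Complex.one_re, Complex.ofReal_re, Complex.ofReal_im, ω_re, ω_im]
    ring
  refine ⟨hre, pos_of_mul_pos_right (a := 2 * (Complex.sin z).re) ?_ (by positivity)⟩
  rw [show 2 * (Complex.sin z).re * (Complex.sin z).im = (Complex.sin z ^ 2).im by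
    simp [pow_two, Complex.mul_im]; ring, hsq_im]
  positivity

lemma re_pos_and_im_pos_of_mul_eq {s d : ℂ} {c : ℝ} (hc : 0 < c) (hs : 0 < s.re ∧ 0 < s.im)
    (hd : s * d = c * ω) (hd2 : 0 < (d ^ 2).im) : 0 < d.re ∧ 0 < d.im := by
  obtain ⟨hs_re, hs_im⟩ := hs
  have h1 := congrArg Complex.re hd
  have h2 := congrArg Complex.im hd
  simp only [Complex.mul_re, Complex.mul_im, Complex.ofReal_re, Complex.ofReal_im, ω_re,
    ω_im] at h1 h2
  rw [pow_two, Complex.mul_im] at hd2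
  have him : 0 < d.im := by
    have key : (s.re ^ 2 + s.im ^ 2) * d.im = c * (√3 / 2 * s.re + s.im / 2) := by
      linear_combination s.re * h2 - s.im * h1
    have hpos : 0 < (s.re ^ 2 + s.im ^ 2) * d.im := key ▸ by positivity
    exact pos_of_mul_pos_right hpos (by positivity)
  exact ⟨pos_of_mul_pos_left (by linarith) him.le, him⟩

lemma deriv_re_im_eq {β : ℝ → ℂ} {φ : ℝ} (hφ : φ ∈ Ioo 0 π) (hβ : DifferentiableAt ℝ β φ)
    (hcos : ∀ᶠ x in 𝓝 φ, Complex.cos (β x) = 1 + (Real.cos x - 1) * ω) (him : 0 < (β φ).im) :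
    deriv (fun x => (β x).re) φ = reDeriv (1 - Real.cos φ) ∧
      deriv (fun x => (β x).im) φ = imDeriv (1 - Real.cos φ) := by
  have hsin : 0 < Real.sin φ := Real.sin_pos_of_pos_of_lt_pi hφ.1 hφ.2
  have hsin_sq : Real.sin φ ^ 2 = (1 - Real.cos φ) * (2 - (1 - Real.cos φ)) := by
    linear_combination Real.sin_sq_add_cos_sq φ
  obtain ⟨hcos_gt, hcos_lt⟩ : -1 < Real.cos φ ∧ Real.cos φ < 1 :=
    abs_lt.1 ((sq_lt_one_iff_abs_lt_one _).1 (by nlinarith [Real.sin_sq_add_cos_sq φ]))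
  have hz : Complex.cos (β φ) = 1 - ((1 - Real.cos φ : ℝ) : ℂ) * ω := by
    rw [hcos.self_of_nhds]; push_cast; ring
  have hd := sin_mul_deriv_eq hβ hcos
  have hsq : deriv β φ ^ 2 = derivSq (1 - Real.cos φ) :=
    sq_eq_derivSq (sub_pos.2 hcos_lt).ne' hsin_sq hz hd
  have hsq_im : 0 < (deriv β φ ^ 2).im := by
    rw [hsq, im_derivSq]
    exact div_pos (mul_pos (by positivity) (by linarith)) (sq_add_two_mul_add_four_pos _)
  obtain ⟨hre_pos, him_pos⟩ := re_pos_and_im_pos_of_mul_eq hsin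
    (sin_re_pos_and_im_pos (sub_pos.2 hcos_lt) hz him) hd hsq_im
  rw [(HasDerivAt.re hβ.hasDerivAt).deriv, (HasDerivAt.im hβ.hasDerivAt).deriv, reDeriv, imDeriv,
    ← hsq]
  exact ⟨Complex.re_eq_sqrt_of_nonneg hre_pos.le, Complex.im_eq_sqrt_of_nonneg him_pos.le⟩

lemma strictAntiOn_and_tendsto_of_eqOn {f F : ℝ → ℝ} (hF : StrictAntiOn F (Icc 0 2))
    (hFc : Continuous F) (hf : EqOn f (fun φ => F (1 - Real.cos φ)) (Ioo 0 π)) :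
    StrictAntiOn f (Ioo 0 π) ∧ Tendsto f (𝓝[>] 0) (𝓝 (F 0)) ∧ Tendsto f (𝓝[<] π) (𝓝 (F 2)) := by
  have hmono : StrictMonoOn (fun φ => 1 - Real.cos φ) (Ioo 0 π) := fun x hx y hy hxy => by
    linarith [Real.strictAntiOn_cos (Ioo_subset_Icc_self hx) (Ioo_subset_Icc_self hy) hxy]
  have hmaps : MapsTo (fun φ => 1 - Real.cos φ) (Ioo 0 π) (Icc 0 2) := fun x _ =>
    ⟨by linarith [Real.cos_le_one x], by linarith [Real.neg_one_le_cos x]⟩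
  have hcont : Continuous fun φ => F (1 - Real.cos φ) := by fun_prop
  refine ⟨(hF.comp_strictMonoOn hmono hmaps).congr hf.symm, ?_, ?_⟩
  · have := (hcont.tendsto 0).mono_left (nhdsWithin_le_nhds (s := Ioi 0))
    simp only [Real.cos_zero, sub_self] at this
    exact this.congr' (eventuallyEq_of_mem (Ioo_mem_nhdsGT Real.pi_pos) hf.symm)
  · have := (hcont.tendsto π).mono_left (nhdsWithin_le_nhds (s := Iio π))
    norm_num only [Real.cos_pi] at this
    exact this.congr' (eventuallyEq_of_mem (Ioo_mem_nhdsLT Real.pi_pos) hf.symm)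

end ArccosBranch

open ArccosBranch in
theorem deriv_re_im_branch_strictAnti_general (β : ℝ → ℂ)
    (hdiff : ∀ φ ∈ Ioo (0 : ℝ) π, DifferentiableAt ℝ β φ)
    (hcos : ∀ φ ∈ Icc (0 : ℝ) π, Complex.cos (β φ) =
      1 + ((Real.cos φ : ℂ) - 1) * Complex.exp (2 * Real.pi * Complex.I / 3))
    (him : ∀ φ ∈ Ioo (0 : ℝ) π, 0 < (β φ).im) :
    StrictAntiOn (deriv fun φ => (β φ).re) (Ioo 0 π) ∧
      StrictAntiOn (deriv fun φ => (β φ).im) (Ioo 0 π) ∧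
      Tendsto (deriv fun φ => (β φ).re) (𝓝[>] 0) (𝓝 (1 / 2)) ∧
      Tendsto (deriv fun φ => (β φ).re) (𝓝[<] π) (𝓝 0) ∧
      Tendsto (deriv fun φ => (β φ).im) (𝓝[>] 0) (𝓝 (Real.sqrt 3 / 2)) ∧
      Tendsto (deriv fun φ => (β φ).im) (𝓝[<] π) (𝓝 0) := by
  have hderiv (φ : ℝ) (hφ : φ ∈ Ioo 0 π) :=
    deriv_re_im_eq hφ (hdiff φ hφ) (eventually_of_mem (isOpen_Ioo.mem_nhds hφ)
      fun x hx => hcos x (Ioo_subset_Icc_self hx)) (him φ hφ)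
  obtain ⟨hre_anti, hre_zero, hre_pi⟩ := strictAntiOn_and_tendsto_of_eqOn strictAntiOn_reDeriv
    continuous_reDeriv fun φ hφ => (hderiv φ hφ).1
  obtain ⟨him_anti, him_zero, him_pi⟩ := strictAntiOn_and_tendsto_of_eqOn strictAntiOn_imDeriv
    continuous_imDeriv fun φ hφ => (hderiv φ hφ).2
  exact ⟨hre_anti, him_anti, reDeriv_zero ▸ hre_zero, reDeriv_two ▸ hre_pi,
    imDeriv_zero ▸ him_zero, imDeriv_two ▸ him_pi⟩

theorem deriv_re_im_branch_strictAnti (β : ℝ → ℂ)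
    (hβ0 : β 0 = 0)
    (hcont : ContinuousOn β (Icc 0 π))
    (hdiff : ∀ φ ∈ Ioo (0 : ℝ) π, DifferentiableAt ℝ β φ)
    (hcos : ∀ φ ∈ Icc (0 : ℝ) π, Complex.cos (β φ) =
      1 + ((Real.cos φ : ℂ) - 1) * Complex.exp (2 * Real.pi * Complex.I / 3))
    (him : ∀ φ ∈ Ioo (0 : ℝ) π, 0 < (β φ).im) :
    StrictAntiOn (deriv fun φ => (β φ).re) (Ioo 0 π) ∧
      StrictAntiOn (deriv fun φ => (β φ).im) (Ioo 0 π) ∧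
      Tendsto (deriv fun φ => (β φ).re) (𝓝[>] 0) (𝓝 (1 / 2)) ∧
      Tendsto (deriv fun φ => (β φ).re) (𝓝[<] π) (𝓝 0) ∧
      Tendsto (deriv fun φ => (β φ).im) (𝓝[>] 0) (𝓝 (Real.sqrt 3 / 2)) ∧
      Tendsto (deriv fun φ => (β φ).im) (𝓝[<] π) (𝓝 0) :=
  deriv_re_im_branch_strictAnti_general β hdiff hcos him
end
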